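/- Let G be a graph of order β − 1 joined completely to an independent set of n − β + 1 vertices (i.e., the join K_{β−1} + complement-of-K_{n−β+1}). Then this graph contains no matching of size β. Consequently, for a spider T with p ≥ 2 legs each of length at least 2 and β = β(T) = min{ν(T − e) : e ∈ E(T)}, the edge-coloring of K_n (n ≥ |V(T)|) that colors all edges of K_{β−1} + complement-of-K_{n−β+1} with pairwise distinct colors and all remaining edges with one additional color contains no rainbow copy of T when T has no leg of even length or at least two legs of even length. -/

import Mathlib

open SimpleGraph Finset

/-- Number of colors used by an edge-coloring of the complete graph on `Fin n`. -/
noncomputable def colorCount {n : ℕ} (c : Sym2 (Fin n) → ℕ) : ℕ :=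
  (c '' (⊤ : SimpleGraph (Fin n)).edgeSet).ncard

/-- The coloring `c` of `K_n` admits a rainbow copy of the graph `G`. -/
def HasRainbowCopy {α : Type*} {n : ℕ} (c : Sym2 (Fin n) → ℕ) (G : SimpleGraph α) : Prop :=
  ∃ f : α → Fin n, Function.Injective f ∧
    ∀ e₁ ∈ G.edgeSet, ∀ e₂ ∈ G.edgeSet, e₁ ≠ e₂ → c (Sym2.map f e₁) ≠ c (Sym2.map f e₂)

/-- The anti-Ramsey number `ar(K_n, G)`: the maximum number of colors in an edge-coloring
of `K_n` with no rainbow copy of `G`. -/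
noncomputable def antiRamsey (n : ℕ) {α : Type*} (G : SimpleGraph α) : ℕ :=
  sSup {m | ∃ c : Sym2 (Fin n) → ℕ, ¬ HasRainbowCopy c G ∧ colorCount c = m}

/-- The spider with `p` legs of lengths `l 0, …, l (p-1)`: `none` is the center, and the
`i`-th leg is the path `center - (i,0) - (i,1) - ⋯ - (i, l i - 1)` (with `l i` edges). -/
def spider (p : ℕ) (l : Fin p → ℕ) : SimpleGraph (Option (Σ i : Fin p, Fin (l i))) where
  Adj u v :=
    (∃ a, u = none ∧ v = some a ∧ a.2.val = 0) ∨
    (∃ a, v = none ∧ u = some a ∧ a.2.val = 0) ∨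
    (∃ a b, u = some a ∧ v = some b ∧ a.1 = b.1 ∧
      (a.2.val + 1 = b.2.val ∨ b.2.val + 1 = a.2.val))
  symm := by
    constructor
    rintro u v h
    rcases h with ⟨a, h1, h2, h3⟩ | ⟨a, h1, h2, h3⟩ | ⟨a, b, h1, h2, h3, h4⟩
    · exact Or.inr (Or.inl ⟨a, h1, h2, h3⟩)
    · exact Or.inl ⟨a, h1, h2, h3⟩
    · exact Or.inr (Or.inr ⟨b, a, h2, h1, h3.symm, h4.symm⟩)
  loopless := by
    constructor
    rintro u h
    rcases h with ⟨a, h1, h2, h3⟩ | ⟨a, h1, h2, h3⟩ | ⟨a, b, h1, h2, h3, h4⟩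
    · rw [h1] at h2; exact absurd h2 (by simp)
    · rw [h2] at h1; exact absurd h1 (by simp)
    · rw [h1] at h2; injection h2 with h; subst h; omega

/-- `s` is a matching in `G`: a set of edges of `G` which pairwise share no vertex. -/
def IsMatchingIn {V : Type*} (G : SimpleGraph V) (s : Finset (Sym2 V)) : Prop :=
  (∀ e ∈ s, e ∈ G.edgeSet) ∧
  ∀ e₁ ∈ s, ∀ e₂ ∈ s, e₁ ≠ e₂ → ∀ v, v ∈ e₁ → v ∉ e₂

/-- The matching number `ν(G)`: the maximum size of a matching in `G`. -/
noncomputable def matchingNumber {V : Type*} (G : SimpleGraph V) : ℕ :=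
  sSup {m | ∃ s : Finset (Sym2 V), IsMatchingIn G s ∧ s.card = m}

/-- The join of a clique on the first `β - 1` vertices with an independent set on the
remaining `n - β + 1` vertices, i.e. `K_{β-1} + ∁K_{n-β+1}`, realized on `Fin n`. -/
def joinGraph (n β : ℕ) : SimpleGraph (Fin n) where
  Adj u v := u ≠ v ∧ (u.val < β - 1 ∨ v.val < β - 1)
  symm := by
    constructor
    rintro u v ⟨h1, h2⟩
    exact ⟨h1.symm, h2.symm⟩
  loopless := by constructor; rintro u ⟨h, -⟩; exact h rfl

/-! Every edge of `K_{β-1} + ∁K_{n-β+1}` meets the clique on `β - 1` vertices, so its matchings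
have fewer than `β` edges. In a rainbow copy of `T` at most one edge `e` receives the colour shared
by all non-edges of the join graph, so `T - e`, which has a matching of size `ν(T - e) ≥ β(T) = β`,
maps into the join graph: a contradiction. -/

section Matching

variable {V W : Type*} {G : SimpleGraph V} {H : SimpleGraph W}

theorem IsMatchingIn.card_le_of_forall_exists_mem {s : Finset (Sym2 V)} {S : Finset V}
    (hs : IsMatchingIn G s) (hS : ∀ e ∈ s, ∃ v ∈ S, v ∈ e) : s.card ≤ S.card := by
  refine card_le_card_of_forall_subsingleton (fun e v => v ∈ e) hS fun v _ => ?_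
  rintro e₁ ⟨he₁, hv₁⟩ e₂ ⟨he₂, hv₂⟩
  by_contra hne
  exact hs.2 e₁ he₁ e₂ he₂ hne v hv₁ hv₂

theorem IsMatchingIn.image_map [DecidableEq W] {s : Finset (Sym2 V)} {f : V → W}
    (hs : IsMatchingIn G s) (hf : Function.Injective f)
    (hmap : ∀ e ∈ s, Sym2.map f e ∈ H.edgeSet) : IsMatchingIn H (s.image (Sym2.map f)) := by
  refine ⟨by simpa using hmap, ?_⟩
  simp only [mem_image]
  rintro _ ⟨e₁, he₁, rfl⟩ _ ⟨e₂, he₂, rfl⟩ hne w hw₁ hw₂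
  obtain ⟨u, hu, rfl⟩ := Sym2.mem_map.mp hw₁
  obtain ⟨v, hv, huv⟩ := Sym2.mem_map.mp hw₂
  exact hs.2 e₁ he₁ e₂ he₂ (fun h => hne (h ▸ rfl)) u hu (hf huv ▸ hv)

theorem exists_isMatchingIn_card_eq_matchingNumber [Finite V] (G : SimpleGraph V) :
    ∃ s : Finset (Sym2 V), IsMatchingIn G s ∧ s.card = matchingNumber G := by
  have : Fintype V := Fintype.ofFinite V
  classical
  refine Nat.sSup_mem (s := {m | ∃ s : Finset (Sym2 V), IsMatchingIn G s ∧ s.card = m})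
    ⟨0, ∅, ⟨by simp, by simp⟩, rfl⟩ ⟨Fintype.card (Sym2 V), ?_⟩
  rintro _ ⟨s, -, rfl⟩
  exact card_le_univ s

end Matching

theorem card_lt_of_isMatchingIn_joinGraph {n β : ℕ} (hβ : 1 ≤ β) {s : Finset (Sym2 (Fin n))}
    (hs : IsMatchingIn (joinGraph n β) s) : s.card < β := by
  have hcover : ∀ e ∈ s, ∃ v ∈ ({v | v.val < β - 1} : Finset (Fin n)), v ∈ e := by
    intro e he
    induction e using Sym2.ind with
    | h u v =>
      obtain ⟨-, hu | hv⟩ := hs.1 _ he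
      · exact ⟨u, by simpa using hu, Sym2.mem_mk_left u v⟩
      · exact ⟨v, by simpa using hv, Sym2.mem_mk_right u v⟩
  have := hs.card_le_of_forall_exists_mem hcover
  rw [Fin.card_filter_val_lt] at this
  omega

theorem exists_forall_ne_map_mem_edgeSet_of_rainbow {α W : Type*} {G : SimpleGraph α}
    {H : SimpleGraph W} {c : Sym2 W → ℕ}
    (hc : ∀ e₁ e₂, e₁ ∉ H.edgeSet → e₂ ∉ H.edgeSet → c e₁ = c e₂) {f : α → W}
    (hrb : ∀ e₁ ∈ G.edgeSet, ∀ e₂ ∈ G.edgeSet, e₁ ≠ e₂ → c (Sym2.map f e₁) ≠ c (Sym2.map f e₂))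
    (hG : G.edgeSet.Nonempty) :
    ∃ e₀ ∈ G.edgeSet, ∀ e ∈ G.edgeSet, e ≠ e₀ → Sym2.map f e ∈ H.edgeSet := by
  by_cases hall : ∀ e ∈ G.edgeSet, Sym2.map f e ∈ H.edgeSet
  · obtain ⟨e₀, he₀⟩ := hG
    exact ⟨e₀, he₀, fun e he _ => hall e he⟩
  · push Not at hall
    obtain ⟨e₀, he₀, hout₀⟩ := hall
    exact ⟨e₀, he₀, fun e he hne => by_contra fun hout => hrb e he e₀ he₀ hne (hc _ _ hout hout₀)⟩

theorem not_hasRainbowCopy_of_forall_card_lt {α : Type*} [Finite α] {n β : ℕ}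
    {G : SimpleGraph α} {H : SimpleGraph (Fin n)} {c : Sym2 (Fin n) → ℕ}
    (hH : ∀ s, IsMatchingIn H s → s.card < β)
    (hc : ∀ e₁ e₂, e₁ ∉ H.edgeSet → e₂ ∉ H.edgeSet → c e₁ = c e₂)
    (hG : G.edgeSet.Nonempty) (hν : ∀ e ∈ G.edgeSet, β ≤ matchingNumber (G.deleteEdges {e})) :
    ¬ HasRainbowCopy c G := by
  rintro ⟨f, hf, hrb⟩
  obtain ⟨e₀, he₀, hmap⟩ := exists_forall_ne_map_mem_edgeSet_of_rainbow hc hrb hG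
  obtain ⟨s, hs, hcard⟩ := exists_isMatchingIn_card_eq_matchingNumber (G.deleteEdges {e₀})
  have hsG : ∀ e ∈ s, e ∈ G.edgeSet ∧ e ≠ e₀ := fun e he => by
    simpa [edgeSet_deleteEdges] using hs.1 e he
  have hlt := hH _ (hs.image_map hf fun e he => hmap e (hsG e he).1 (hsG e he).2)
  rw [card_image_of_injective s (Sym2.map.injective hf)] at hlt
  have hβν := hν e₀ he₀
  omega

theorem joinGraph_no_matching_and_no_rainbow_spider_general (n β : ℕ) (hβ : 1 ≤ β) :
    (∀ s : Finset (Sym2 (Fin n)), IsMatchingIn (joinGraph n β) s → s.card < β) ∧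
    (∀ (p : ℕ) (l : Fin p → ℕ), 2 ≤ p → (∀ i, 2 ≤ l i) →
      β = sInf {m | ∃ e ∈ (spider p l).edgeSet,
        matchingNumber ((spider p l).deleteEdges {e}) = m} →
      1 + ∑ i, l i ≤ n →
      (Finset.univ.filter fun i => Even (l i)).card ≠ 1 →
      ∀ c : Sym2 (Fin n) → ℕ,
        (∀ e₁ ∈ (joinGraph n β).edgeSet, ∀ e₂ ∈ (joinGraph n β).edgeSet,
          e₁ ≠ e₂ → c e₁ ≠ c e₂) →
        (∀ e₁ e₂ : Sym2 (Fin n), e₁ ∉ (joinGraph n β).edgeSet → e₂ ∉ (joinGraph n β).edgeSet →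
          c e₁ = c e₂) →
        (∀ e₁ ∈ (joinGraph n β).edgeSet, ∀ e₂ : Sym2 (Fin n), e₂ ∉ (joinGraph n β).edgeSet →
          c e₁ ≠ c e₂) →
        ¬ HasRainbowCopy c (spider p l)) := by
  have hjoin := fun s => card_lt_of_isMatchingIn_joinGraph (n := n) (s := s) hβ
  refine ⟨hjoin, fun p l _ _ hβT _ _ c _ hc _ => ?_⟩
  have hT : (spider p l).edgeSet.Nonempty := by
    by_contra hempty
    rw [Set.not_nonempty_iff_eq_empty] at hempty
    have hβ0 : β = 0 := by simpa [hempty] using hβT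
    omega
  refine not_hasRainbowCopy_of_forall_card_lt hjoin hc hT fun e he => ?_
  exact hβT ▸ Nat.sInf_le ⟨e, he, rfl⟩

/-- The graph `K_{β-1} + ∁K_{n-β+1}` contains no matching of size `β`; consequently, for a
spider `T` with `p ≥ 2` legs, each of length at least 2, with `β = β(T) = min{ν(T-e)}`, any
edge-coloring of `K_n` (`n ≥ |V(T)|`) giving the edges of `K_{β-1} + ∁K_{n-β+1}` pairwise
distinct colors and all remaining pairs one further color has no rainbow copy of `T`,
provided `T` does not have exactly one leg of even length. -/
theorem joinGraph_no_matching_and_no_rainbow_spider (n β : ℕ) (hβ : 1 ≤ β) (hβn : β ≤ n) :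
    (∀ s : Finset (Sym2 (Fin n)), IsMatchingIn (joinGraph n β) s → s.card < β) ∧
    (∀ (p : ℕ) (l : Fin p → ℕ), 2 ≤ p → (∀ i, 2 ≤ l i) →
      β = sInf {m | ∃ e ∈ (spider p l).edgeSet,
        matchingNumber ((spider p l).deleteEdges {e}) = m} →
      1 + ∑ i, l i ≤ n →
      (Finset.univ.filter fun i => Even (l i)).card ≠ 1 →
      ∀ c : Sym2 (Fin n) → ℕ,
        (∀ e₁ ∈ (joinGraph n β).edgeSet, ∀ e₂ ∈ (joinGraph n β).edgeSet,
          e₁ ≠ e₂ → c e₁ ≠ c e₂) →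
        (∀ e₁ e₂ : Sym2 (Fin n), e₁ ∉ (joinGraph n β).edgeSet → e₂ ∉ (joinGraph n β).edgeSet →
          c e₁ = c e₂) →
        (∀ e₁ ∈ (joinGraph n β).edgeSet, ∀ e₂ : Sym2 (Fin n), e₂ ∉ (joinGraph n β).edgeSet →
          c e₁ ≠ c e₂) →
        ¬ HasRainbowCopy c (spider p l)) :=
  joinGraph_no_matching_and_no_rainbow_spider_general n β hβ
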